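/- arXiv:1111.7256 — 2 statements merged into one kernel-verified Lean document; each statement's English description precedes it below -/
import Mathlib

section
/- Let G be a topological group, let U and V be compact open subgroups of G, and let D(U) denote the largest normal pro-p subgroup (the p-core) of U. If V is a normal subgroup of U, then the p-core of U intersected with V equals the p-core of V; in particular the p-core of V has finite index in the p-core of U. -/
/-- A closed subgroup `S` of a topological group is pro-`p` if every open subgroup
of the ambient group has `p`-power relative index in `S`. -/
def IsProP {G : Type*} [Group G] [TopologicalSpace G] (p : ℕ) (S : Subgroup G) : Prop :=
  IsClosed (S : Set G) ∧ ∀ N : Subgroup G, IsOpen (N : Set G) → ∃ n : ℕ, N.relIndex S = p ^ n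

/-- `D` is the `p`-core of the subgroup `H`: the largest pro-`p` subgroup of `H`
normalised by all of `H`. -/
def IsPCoreIn {G : Type*} [Group G] [TopologicalSpace G] (p : ℕ) (H D : Subgroup G) : Prop :=
  D ≤ H ∧ IsProP p D ∧ (∀ h ∈ H, ∀ d ∈ D, h * d * h⁻¹ ∈ D) ∧
    ∀ N : Subgroup G, N ≤ H → (∀ h ∈ H, ∀ n ∈ N, h * n * h⁻¹ ∈ N) → IsProP p N → N ≤ D

/-!
Conjugation by an element of `U` is a topological automorphism preserving `V`, so it maps the
`p`-core of `V` to a pro-`p` subgroup of `V` normalised by `V`; by maximality `O_p(V)` is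
normalised by `U`, hence `O_p(V) ≤ O_p(U)`. Conversely `O_p(U) ∩ V` is normalised by `V`, and it is
pro-`p` because its index in any open subgroup divides a relative index in `O_p(U)`; hence
`O_p(U) ∩ V ≤ O_p(V)`. Finally `[O_p(U) : O_p(U) ∩ V]` is the relative index of the open
subgroup `V` in `O_p(U)`, a power of `p`.
-/

namespace IsProP

variable {G : Type*} [Group G] [TopologicalSpace G] {p : ℕ} {S : Subgroup G}

theorem relIndex_ne_zero (hp : p ≠ 0) (hS : IsProP p S) {N : Subgroup G}
    (hN : IsOpen (N : Set G)) : N.relIndex S ≠ 0 := by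
  obtain ⟨n, hn⟩ := hS.2 N hN
  exact hn ▸ pow_ne_zero n hp

theorem map {G' : Type*} [Group G'] [TopologicalSpace G'] (hS : IsProP p S) (e : G ≃* G')
    (he : Continuous e) (he_symm : Continuous e.symm) : IsProP p (S.map (e : G →* G')) := by
  refine ⟨?_, fun N hN => ?_⟩
  · rw [Subgroup.map_equiv_eq_comap_symm, Subgroup.coe_comap]
    exact hS.1.preimage he_symm
  · rw [← Subgroup.relIndex_comap]
    exact hS.2 _ (hN.preimage he)

theorem inf_of_isOpen [SeparatelyContinuousMul G] (hp : p.Prime) (hS : IsProP p S)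
    {W : Subgroup G} (hW : IsOpen (W : Set G)) : IsProP p (S ⊓ W) := by
  refine ⟨hS.1.inter (W.isClosed_of_isOpen hW), fun N hN => ?_⟩
  obtain ⟨n, hn⟩ := hS.2 (N ⊓ W) (hN.inter hW)
  have hdvd : N.relIndex (S ⊓ W) ∣ p ^ n := by
    rw [← hn, ← Subgroup.relIndex_inf_mul_relIndex, inf_comm S]
    exact dvd_mul_right _ _
  obtain ⟨i, -, hi⟩ := (Nat.dvd_prime_pow hp).mp hdvd
  exact ⟨i, hi⟩

end IsProP

namespace IsPCoreIn

variable {G : Type*} [Group G] [TopologicalSpace G] {p : ℕ} {H D : Subgroup G}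

theorem map_le (hD : IsPCoreIn p H D) (e : G ≃* G) (he : Continuous e)
    (he_symm : Continuous e.symm) (hH : H.map (e : G →* G) = H) : D.map (e : G →* G) ≤ D := by
  have hDp : IsProP p D := hD.2.1
  obtain ⟨hDH, -, hDnorm, hDmax⟩ := hD
  refine hDmax _ (hH ▸ Subgroup.map_mono hDH) ?_ (hDp.map e he he_symm)
  rintro h hh _ ⟨d, hd, rfl⟩
  obtain ⟨h', hh', rfl⟩ : h ∈ H.map e := hH.symm ▸ hh
  exact ⟨h' * d * h'⁻¹, hDnorm h' hh' d hd, by simp⟩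

theorem conj_mem [SeparatelyContinuousMul G] (hD : IsPCoreIn p H D) {g : G}
    (hg : g ∈ Subgroup.normalizer (H : Set G)) {d : G} (hd : d ∈ D) : g * d * g⁻¹ ∈ D :=
  hD.map_le (MulAut.conj g) (IsTopologicalGroup.continuous_conj g)
    (IsTopologicalGroup.continuous_conj g⁻¹ |>.congr fun _ => by simp)
    (Subgroup.mem_normalizer_iff_map_conj_eq.mp hg) ⟨d, hd, rfl⟩

theorem le_of_le_normalizer [SeparatelyContinuousMul G] {U DU : Subgroup G}
    (hDU : IsPCoreIn p U DU) (hD : IsPCoreIn p H D) (hHU : H ≤ U)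
    (hUH : U ≤ Subgroup.normalizer (H : Set G)) : D ≤ DU :=
  hDU.2.2.2 D (hD.1.trans hHU) (fun _ hu _ hd => hD.conj_mem (hUH hu) hd) hD.2.1

theorem inf_le [SeparatelyContinuousMul G] (hp : p.Prime) {U DU : Subgroup G}
    (hDU : IsPCoreIn p U DU) (hD : IsPCoreIn p H D) (hHU : H ≤ U) (hH : IsOpen (H : Set G)) :
    DU ⊓ H ≤ D := by
  refine hD.2.2.2 _ inf_le_right (fun h hh x hx => ?_) (hDU.2.1.inf_of_isOpen hp hH)
  exact ⟨hDU.2.2.1 h (hHU hh) x hx.1, H.mul_mem (H.mul_mem hh hx.2) (H.inv_mem hh)⟩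

end IsPCoreIn

theorem pCore_inf_of_normal_general {G : Type*} [Group G] [TopologicalSpace G] [IsTopologicalGroup G]
    (p : ℕ) (hp : p.Prime)
    (U V : Subgroup G) (hVo : IsOpen (V : Set G))
    (hVU : V ≤ U) (hVnorm : ∀ u ∈ U, ∀ v ∈ V, u * v * u⁻¹ ∈ V)
    (DU DV : Subgroup G) (hDU : IsPCoreIn p U DU) (hDV : IsPCoreIn p V DV) :
    DU ⊓ V = DV ∧ DV.relIndex DU ≠ 0 := by
  have hUV : U ≤ Subgroup.normalizer (V : Set G) := fun u hu =>
    Subgroup.mem_normalizer_iff.mpr fun v =>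
      ⟨hVnorm u hu v, fun h => by simpa [mul_assoc] using hVnorm u⁻¹ (inv_mem hu) _ h⟩
  have hDUV : DU ⊓ V = DV :=
    le_antisymm (hDU.inf_le hp hDV hVU hVo) (le_inf (hDU.le_of_le_normalizer hDV hVU hUV) hDV.1)
  refine ⟨hDUV, ?_⟩
  rw [← hDUV, Subgroup.inf_relIndex_left]
  exact hDU.2.1.relIndex_ne_zero hp.ne_zero hVo

/-- if `U`, `V` are compact open subgroups of a topological group with `V`
a normal subgroup of `U`, then `O_p(U) ∩ V = O_p(V)`; in particular `O_p(V)` has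
finite index in `O_p(U)`. -/
theorem pCore_inf_of_normal {G : Type*} [Group G] [TopologicalSpace G] [IsTopologicalGroup G]
    (p : ℕ) (hp : p.Prime)
    (U V : Subgroup G) (hUc : IsCompact (U : Set G)) (hUo : IsOpen (U : Set G))
    (hVc : IsCompact (V : Set G)) (hVo : IsOpen (V : Set G))
    (hVU : V ≤ U) (hVnorm : ∀ u ∈ U, ∀ v ∈ V, u * v * u⁻¹ ∈ V)
    (DU DV : Subgroup G) (hDU : IsPCoreIn p U DU) (hDV : IsPCoreIn p V DV) :
    DU ⊓ V = DV ∧ DV.relIndex DU ≠ 0 :=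
  pCore_inf_of_normal_general p hp U V hVo hVU hVnorm DU DV hDU hDV
end

section
/- Let T be the k-regular tree (k ≥ 3) and let x be a hyperbolic automorphism of T with axis Π and translation length n. Let v be a vertex on Π and U the pointwise stabiliser of the segment [v, xv] in Aut(T) among automorphisms fixing v and xv. Then the actions of U on the two components of T minus the pair {interior directions} decompose: U = U₊U₋, where U₊ is the stabiliser of the ray from v towards the attracting end and U₋ is the stabiliser of the ray from xv towards the repelling end. -/
/-!
Let `w` be the neighbour of `v` towards `x v`. Removing the edge `vw` splits the tree into the
half-tree of `v` and the half-tree of `w`. Minimal displacement at `v` and the absence of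
inversions force `x` to map the half-tree of `w` into itself, so `xᵐ v` lies on the side of `v`
exactly when `m ≤ 0`. Every `s ∈ U` fixes `w` as well, hence preserves both half-trees, and since
`vw` is the only edge between them, acting as `s` on the side of `v` and trivially on the side
of `w` is again an automorphism `u₊`. It fixes `xᵐ v` for all `m ≥ 0`, so `u₊ ∈ U₊`, while
`u₋ = u₊⁻¹ s` is trivial on the side of `v` and fixes `x v`, so `u₋ ∈ U₋`.
-/

open Pointwise

lemma Equiv.Perm.zpow_apply_mem_iff_pos {α : Type*} {x : Equiv.Perm α} {H : Set α} {a : α}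
    (hH : Set.MapsTo x H H) (ha : a ∉ H) (hxa : x a ∈ H) (m : ℤ) : (x ^ m) a ∈ H ↔ 0 < m := by
  have hpow : ∀ n : ℕ, Set.MapsTo ⇑(x ^ n) H H := fun n => by
    rw [Equiv.Perm.coe_pow]
    exact hH.iterate n
  constructor
  · intro hm
    by_contra! hm'
    obtain ⟨n, hn⟩ : ∃ n : ℕ, m = -n := ⟨m.natAbs, by omega⟩
    apply ha
    simpa [hn] using hpow n hm
  · intro hm
    obtain ⟨n, rfl⟩ : ∃ n : ℕ, m = n + 1 := ⟨m.toNat - 1, by omega⟩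
    rw [zpow_add_one, zpow_natCast, Equiv.Perm.mul_apply]
    exact hpow n hxa

namespace SimpleGraph

variable {V V' : Type*} {G : SimpleGraph V} {a b c d u v w : V}

lemma Iso.dist_map {G' : SimpleGraph V'} (φ : G ≃g G') (a b : V) :
    G'.dist (φ a) (φ b) = G.dist a b := by
  by_cases hab : G.Reachable a b
  · obtain ⟨p, hp⟩ := hab.exists_walk_length_eq_dist
    have hφ : G'.Reachable (φ a) (φ b) := hab.map φ.toHom
    obtain ⟨q, hq⟩ := hφ.exists_walk_length_eq_dist
    have h₁ := G'.dist_le (p.map φ.toHom)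
    have h₂ := G.dist_le (q.map φ.symm.toHom)
    simp only [RelHom.coeFn_mk, RelIso.coe_fn_toEquiv, Function.Embedding.toFun_eq_coe,
      Function.Embedding.coeFn_mk, Walk.length_map, RelIso.symm_apply_apply] at h₁ h₂
    omega
  · have hφ : ¬ G'.Reachable (φ a) (φ b) := fun h => hab (by simpa using h.map φ.symm.toHom)
    rw [dist_eq_zero_of_not_reachable hab, dist_eq_zero_of_not_reachable hφ]

lemma Walk.dist_add_dist_of_mem_support {p : G.Walk u v} (hp : p.length = G.dist u v)
    (hw : w ∈ p.support) : G.dist u w + G.dist w v = G.dist u v := by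
  classical
  have hlen := congrArg Walk.length (p.take_spec hw)
  rw [Walk.length_append] at hlen
  have h₁ := G.dist_le (p.takeUntil w hw)
  have h₂ := G.dist_le (p.dropUntil w hw)
  have h₃ := (p.takeUntil w hw).reachable.dist_triangle_left v
  omega

lemma Connected.exists_adj_dist_lt (hG : G.Connected) (hne : u ≠ v) :
    ∃ w, G.Adj u w ∧ G.dist w v < G.dist u v := by
  obtain ⟨p, hp⟩ := hG.exists_walk_length_eq_dist u v
  have hnil : ¬ p.Nil := fun h => hne h.eq
  refine ⟨p.snd, p.adj_snd hnil, ?_⟩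
  have := G.dist_le p.tail
  have := p.length_tail_add_one hnil
  omega

/-- For adjacent `a` and `b` in a tree, the component of `a` once the edge `ab` is removed. -/
def halfTree (G : SimpleGraph V) (a b : V) : Set V := {c | G.dist c a < G.dist c b}

@[simp] lemma mem_halfTree : c ∈ G.halfTree a b ↔ G.dist c a < G.dist c b := Iff.rfl

lemma Iso.apply_mem_halfTree_iff (φ : G ≃g G) (ha : φ a = a) (hb : φ b = b) (c : V) :
    φ c ∈ G.halfTree a b ↔ c ∈ G.halfTree a b := by
  conv_lhs => rw [← ha, ← hb]
  simp only [mem_halfTree, Iso.dist_map]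

namespace IsTree

lemma notMem_halfTree_iff (hT : G.IsTree) (hab : G.Adj a b) :
    c ∉ G.halfTree a b ↔ c ∈ G.halfTree b a := by
  have := hT.dist_ne_of_adj c hab
  simp only [mem_halfTree]
  omega

lemma dist_eq_of_mem_halfTree (hT : G.IsTree) (hab : G.Adj a b) (hc : c ∈ G.halfTree a b)
    (hd : d ∈ G.halfTree b a) : G.dist c d = G.dist c a + 1 + G.dist b d := by
  rw [mem_halfTree] at hc hd
  obtain ⟨p, hp⟩ := hT.connected.exists_walk_length_eq_dist c d
  obtain ⟨q, hq⟩ := hT.connected.exists_walk_length_eq_dist a c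
  obtain ⟨r, hr⟩ := hT.connected.exists_walk_length_eq_dist d b
  have := G.dist_comm (u := c) (v := a)
  have := G.dist_comm (u := c) (v := b)
  have := G.dist_comm (u := d) (v := b)
  have := G.dist_comm (u := a) (v := d)
  have hab₁ : G.dist a b = 1 := dist_eq_one_iff_adj.mpr hab
  have hba₁ : G.dist b a = 1 := dist_eq_one_iff_adj.mpr hab.symm
  -- `ab` is a bridge, so the walk `a ⟶ c ⟶ d ⟶ b` uses it, and only the geodesic `c ⟶ d` can.
  have hbridge := isBridge_iff_forall_walk_mem_edges.mp
    (isAcyclic_iff_forall_adj_isBridge.mp hT.isAcyclic hab) ((q.append p).append r)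
  simp only [Walk.edges_append, List.mem_append] at hbridge
  have hq' : s(a, b) ∉ q.edges := fun h => by
    have := Walk.dist_add_dist_of_mem_support hq (q.snd_mem_support_of_mem_edges h)
    omega
  have hr' : s(a, b) ∉ r.edges := fun h => by
    have := Walk.dist_add_dist_of_mem_support hr (r.fst_mem_support_of_mem_edges h)
    omega
  have hpa := Walk.dist_add_dist_of_mem_support hp
    (p.fst_mem_support_of_mem_edges (by tauto))
  have hdab := hT.dist_eq_dist_add_one_of_adj d hab
  omega

lemma adj_iff_of_mem_halfTree (hT : G.IsTree) (hab : G.Adj a b) (hc : c ∈ G.halfTree a b)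
    (hd : d ∈ G.halfTree b a) : G.Adj c d ↔ c = a ∧ d = b := by
  refine ⟨fun hcd => ?_, fun ⟨hca, hdb⟩ => hca ▸ hdb ▸ hab⟩
  have h := hT.dist_eq_of_mem_halfTree hab hc hd
  rw [dist_eq_one_iff_adj.mpr hcd] at h
  exact ⟨hT.connected.dist_eq_zero_iff.mp (by omega),
    (hT.connected.dist_eq_zero_iff.mp (by omega)).symm⟩

lemma eq_of_adj_of_dist_lt {w' t : V} (hT : G.IsTree) (hw : G.Adj a w) (hw' : G.Adj a w')
    (ht : G.dist w t < G.dist a t) (ht' : G.dist w' t < G.dist a t) : w = w' := by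
  by_contra hne
  have h₁ : G.dist w' a = 1 := dist_eq_one_iff_adj.mpr hw'.symm
  have h₂ := hT.dist_ne_of_adj w' hw
  have h₃ : G.dist w' w ≠ 0 := fun h => hne (hT.connected.dist_eq_zero_iff.mp h).symm
  have hw'H : w' ∈ G.halfTree a w := by
    rw [mem_halfTree]
    omega
  have htH : t ∈ G.halfTree w a := by
    rw [mem_halfTree, G.dist_comm, G.dist_comm (u := t)]
    exact ht
  have hsep := hT.dist_eq_of_mem_halfTree hw hw'H htH
  have := hT.dist_eq_dist_add_one_of_adj t hw
  rw [G.dist_comm (u := t), G.dist_comm (u := t)] at this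
  omega

lemma apply_eq_self_of_adj_of_dist_lt {t : V} (hT : G.IsTree) (φ : G ≃g G) (ha : φ a = a)
    (ht : φ t = t) (hw : G.Adj a w) (hwt : G.dist w t < G.dist a t) : φ w = w := by
  refine hT.eq_of_adj_of_dist_lt (t := t) ?_ hw ?_ hwt
  · simpa [ha] using φ.map_adj_iff.2 hw
  · conv_lhs => rw [← ht]
    rwa [Iso.dist_map]

lemma exists_iso_eqOn_halfTree (hT : G.IsTree) (hab : G.Adj a b) (φ : G ≃g G) (ha : φ a = a)
    (hb : φ b = b) : ∃ ψ : G ≃g G,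
      (∀ c ∈ G.halfTree a b, ψ c = φ c) ∧ ∀ c ∉ G.halfTree a b, ψ c = c := by
  classical
  set H := G.halfTree a b
  have hφH := Iso.apply_mem_halfTree_iff φ ha hb
  have hcross : ∀ c d, c ∈ H → d ∉ H → (G.Adj (φ c) d ↔ G.Adj c d) := by
    intro c d hc hd
    rw [hT.notMem_halfTree_iff hab] at hd
    rw [hT.adj_iff_of_mem_halfTree hab ((hφH c).2 hc) hd,
      hT.adj_iff_of_mem_halfTree hab hc hd]
    exact ⟨fun h => ⟨φ.injective (h.1.trans ha.symm), h.2⟩, fun h => ⟨h.1 ▸ ha, h.2⟩⟩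
  let f : Equiv.Perm V := Equiv.Perm.ofSubtype (Equiv.Perm.subtypePerm φ.toEquiv hφH)
  have hf : ∀ c, f c = if c ∈ H then φ c else c := fun c => by
    split_ifs with hc
    · exact Equiv.Perm.ofSubtype_subtypePerm_of_mem _ hc
    · exact Equiv.Perm.ofSubtype_subtypePerm_of_not_mem _ hc
  refine ⟨⟨f, fun {c d} => ?_⟩, fun c hc => by simp [hf, hc], fun c hc => by simp [hf, hc]⟩
  simp only [hf]
  by_cases hc : c ∈ H <;> by_cases hd : d ∈ H <;> simp only [hc, hd, if_true, if_false]
  · exact φ.map_adj_iff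
  · exact hcross c d hc hd
  · rw [adj_comm, hcross d c hd hc, adj_comm]

lemma exists_iso_mul_eq (hT : G.IsTree) (hab : G.Adj a b) (φ : G ≃g G) (ha : φ a = a)
    (hb : φ b = b) : ∃ ψ₁ ψ₂ : G ≃g G, ψ₁.toEquiv * ψ₂.toEquiv = φ.toEquiv ∧
      (∀ c, c ∉ G.halfTree a b ∨ φ c = c → ψ₁ c = c) ∧
      (∀ c, c ∈ G.halfTree a b ∨ φ c = c → ψ₂ c = c) := by
  obtain ⟨ψ, hψ, hψc⟩ := hT.exists_iso_eqOn_halfTree hab φ ha hb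
  have hψφ : ∀ c, ψ c = φ c → ψ.symm (φ c) = c := fun c h => by rw [← h, RelIso.symm_apply_apply]
  refine ⟨ψ, φ.trans ψ.symm, Equiv.ext fun c => by simp, ?_, ?_⟩
  · rintro c (hc | hc)
    · exact hψc c hc
    · by_cases hcH : c ∈ G.halfTree a b
      · exact (hψ c hcH).trans hc
      · exact hψc c hcH
  · rintro c (hc | hc)
    · exact hψφ c (hψ c hc)
    · by_cases hcH : c ∈ G.halfTree a b
      · exact hψφ c (hψ c hcH)
      · exact hψφ c ((hψc c hcH).trans hc.symm)

lemma mapsTo_halfTree_of_dist_le (hT : G.IsTree) (φ : G ≃g G) (hvw : G.Adj v w)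
    (hφv : φ v ∈ G.halfTree w v) (hmin : G.dist v (φ v) ≤ G.dist w (φ w))
    (hinv : ¬ (G.Adj v (φ v) ∧ φ (φ v) = v)) :
    Set.MapsTo φ (G.halfTree w v) (G.halfTree w v) := by
  intro c hc
  rw [← hT.notMem_halfTree_iff hvw]
  intro hφc
  have hc' : G.dist (φ c) (φ w) < G.dist (φ c) (φ v) := by simpa [Iso.dist_map] using hc
  -- On the side of `v`, `φ w` would make `φ` invert the edge `vw`; on the side of `w`, it lies
  -- at distance at least `dist v (φ v)` beyond `w`, so `φ c` cannot be closer to it than to `φ v`.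
  by_cases hφw : φ w ∈ G.halfTree v w
  · obtain ⟨hφwv, hφvw⟩ :=
      (hT.adj_iff_of_mem_halfTree hvw hφw hφv).1 (φ.map_adj_iff.2 hvw.symm)
    exact hinv ⟨hφvw ▸ hvw, hφvw ▸ hφwv⟩
  · rw [hT.notMem_halfTree_iff hvw] at hφw
    have hsep := hT.dist_eq_of_mem_halfTree hvw hφc hφw
    have htri := hT.connected.dist_triangle (u := φ c) (v := v) (w := φ v)
    omega

lemma zpow_apply_mem_halfTree_iff (hT : G.IsTree) (φ : G ≃g G) (hvw : G.Adj v w)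
    (hφv : φ v ∈ G.halfTree w v) (hmin : G.dist v (φ v) ≤ G.dist w (φ w))
    (hinv : ¬ (G.Adj v (φ v) ∧ φ (φ v) = v)) (m : ℤ) :
    (φ.toEquiv ^ m) v ∈ G.halfTree v w ↔ m ≤ 0 := by
  have hv : v ∉ G.halfTree w v := by simp
  rw [← hT.notMem_halfTree_iff hvw.symm, Equiv.Perm.zpow_apply_mem_iff_pos
    (hT.mapsTo_halfTree_of_dist_le φ hvw hφv hmin hinv) hv hφv, not_lt]

end IsTree

end SimpleGraph

lemma Subgroup.mem_map_conj_zpow_of_smul_eq {G α : Type*} [Group G] [MulAction G α]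
    {A : Subgroup G} {x u : G} (hx : x ∈ A) (hu : u ∈ A) {a : α} (j : ℤ)
    (h₀ : u • x ^ j • a = x ^ j • a) (h₁ : u • x ^ (j + 1) • a = x ^ (j + 1) • a) :
    u ∈ (A ⊓ MulAction.stabilizer G a ⊓ MulAction.stabilizer G (x • a)).map
      (MulAut.conj (x ^ j)).toMonoidHom := by
  rw [Subgroup.mem_map_equiv, MulAut.conj_symm_apply, Subgroup.mem_inf, Subgroup.mem_inf,
    MulAction.mem_stabilizer_iff, MulAction.mem_stabilizer_iff]
  refine ⟨⟨?_, ?_⟩, ?_⟩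
  · exact A.mul_mem (A.mul_mem (A.inv_mem (A.zpow_mem hx j)) hu) (A.zpow_mem hx j)
  · rw [mul_smul, mul_smul, h₀, inv_smul_smul]
  · rw [mul_smul, mul_smul, smul_smul (x ^ j), ← zpow_add_one,
      h₁, zpow_add_one, mul_smul, inv_smul_smul]

lemma Subgroup.mem_iInf_map_conj_zpow_natCast {G α : Type*} [Group G] [MulAction G α]
    {A : Subgroup G} {x u : G} (hx : x ∈ A) (hu : u ∈ A) {a : α}
    (h : ∀ m : ℤ, 0 ≤ m → u • x ^ m • a = x ^ m • a) :
    u ∈ ⨅ i : ℕ, (A ⊓ MulAction.stabilizer G a ⊓ MulAction.stabilizer G (x • a)).map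
      (MulAut.conj (x ^ (i : ℤ))).toMonoidHom :=
  Subgroup.mem_iInf.2 fun i =>
    mem_map_conj_zpow_of_smul_eq hx hu _ (h _ (by omega)) (h _ (by omega))

lemma Subgroup.mem_iInf_map_conj_zpow_neg_natCast {G α : Type*} [Group G] [MulAction G α]
    {A : Subgroup G} {x u : G} (hx : x ∈ A) (hu : u ∈ A) {a : α}
    (h : ∀ m : ℤ, m ≤ 1 → u • x ^ m • a = x ^ m • a) :
    u ∈ ⨅ i : ℕ, (A ⊓ MulAction.stabilizer G a ⊓ MulAction.stabilizer G (x • a)).map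
      (MulAut.conj (x ^ (-(i : ℤ)))).toMonoidHom :=
  Subgroup.mem_iInf.2 fun i =>
    mem_map_conj_zpow_of_smul_eq hx hu _ (h _ (by omega)) (h _ (by omega))

open SimpleGraph in
theorem tidy_factorisation_for_hyperbolic_general {V : Type*} (T : SimpleGraph V)
    (hconn : T.Connected) (hacyc : T.IsAcyclic)
    (A : Subgroup (Equiv.Perm V))
    (hA : ∀ g : Equiv.Perm V, g ∈ A ↔ ∀ a b : V, T.Adj (g a) (g b) ↔ T.Adj a b)
    (x : Equiv.Perm V) (hxA : x ∈ A)
    (hnofix : ∀ w : V, x w ≠ w)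
    (hnoinv : ∀ w : V, ¬ (T.Adj w (x w) ∧ x (x w) = w))
    (v : V) (hv : ∀ w : V, T.dist v (x v) ≤ T.dist w (x w))
    (U Uplus Uminus : Subgroup (Equiv.Perm V))
    (hU : U = A ⊓ MulAction.stabilizer (Equiv.Perm V) v ⊓
      MulAction.stabilizer (Equiv.Perm V) (x v))
    (hUp : Uplus = ⨅ i : ℕ, U.map (MulAut.conj (x ^ (i : ℤ))).toMonoidHom)
    (hUm : Uminus = ⨅ i : ℕ, U.map (MulAut.conj (x ^ (-(i : ℤ)))).toMonoidHom) :
    (U : Set (Equiv.Perm V)) = (Uplus : Set (Equiv.Perm V)) * (Uminus : Set (Equiv.Perm V)) := by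
  have hT : T.IsTree := ⟨hconn, hacyc⟩
  let toIso (g : Equiv.Perm V) (hg : g ∈ A) : T ≃g T := ⟨g, (hA g).1 hg _ _⟩
  have memA (ψ : T ≃g T) : ψ.toEquiv ∈ A := (hA _).2 fun _ _ => ψ.map_rel_iff
  obtain ⟨w, hvw, hw⟩ := hconn.exists_adj_dist_lt (hnofix v).symm
  have hxv : x v ∈ T.halfTree w v := by
    rw [mem_halfTree, T.dist_comm, T.dist_comm (u := x v)]
    exact hw
  have hxH : ∀ m : ℤ, (x ^ m) v ∈ T.halfTree v w ↔ m ≤ 0 :=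
    hT.zpow_apply_mem_halfTree_iff (toIso x hxA) hvw hxv (hv w) (hnoinv v)
  ext s
  constructor
  · intro hs
    simp only [hU, SetLike.mem_coe, Subgroup.mem_inf, MulAction.mem_stabilizer_iff,
      Equiv.Perm.smul_def] at hs
    obtain ⟨⟨hsA, hsv⟩, hsxv⟩ := hs
    have hsw : s w = w := hT.apply_eq_self_of_adj_of_dist_lt (toIso s hsA) hsv hsxv hvw hw
    obtain ⟨ψ₁, ψ₂, hψ, hψ₁, hψ₂⟩ := hT.exists_iso_mul_eq hvw (toIso s hsA) hsv hsw
    refine ⟨ψ₁.toEquiv, ?_, ψ₂.toEquiv, ?_, hψ⟩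
    · rw [SetLike.mem_coe, hUp, hU]
      refine Subgroup.mem_iInf_map_conj_zpow_natCast hxA (memA ψ₁) fun m hm => hψ₁ _ ?_
      rcases hm.eq_or_lt with rfl | hm
      · exact Or.inr hsv
      · exact Or.inl ((hxH m).not.2 (by omega))
    · rw [SetLike.mem_coe, hUm, hU]
      refine Subgroup.mem_iInf_map_conj_zpow_neg_natCast hxA (memA ψ₂) fun m hm => hψ₂ _ ?_
      rcases hm.eq_or_lt with rfl | hm
      · exact Or.inr ((zpow_one x).symm ▸ hsxv)
      · exact Or.inl ((hxH m).2 (by omega))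
  · rintro ⟨a, ha, b, hb, rfl⟩
    have hUp_le : Uplus ≤ U := hUp ▸ (iInf_le _ 0).trans (by simp [MulAut.one_def])
    have hUm_le : Uminus ≤ U := hUm ▸ (iInf_le _ 0).trans (by simp [MulAut.one_def])
    exact U.mul_mem (hUp_le ha) (hUm_le hb)

/-- let `T` be the `k`-regular tree (`k ≥ 3`), `A ≤ Sym(V)` its automorphism
group, and `x ∈ A` a hyperbolic automorphism (no fixed vertex and no inverted edge).
Let `v` be a vertex on the axis of `x` (a vertex of minimal displacement), and let
`U = A ∩ Stab(v) ∩ Stab(xv)`. Then `U = U₊U₋` where `U₊ = ⋂_{i ≥ 0} xⁱUx⁻ⁱ` and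
`U₋ = ⋂_{i ≤ 0} xⁱUx⁻ⁱ`. -/
theorem tidy_factorisation_for_hyperbolic {V : Type*} (T : SimpleGraph V)
    (k : ℕ) (hk : 3 ≤ k) (hreg : ∀ w : V, (T.neighborSet w).ncard = k)
    (hconn : T.Connected) (hacyc : T.IsAcyclic)
    (A : Subgroup (Equiv.Perm V))
    (hA : ∀ g : Equiv.Perm V, g ∈ A ↔ ∀ a b : V, T.Adj (g a) (g b) ↔ T.Adj a b)
    (x : Equiv.Perm V) (hxA : x ∈ A)
    (hnofix : ∀ w : V, x w ≠ w)
    (hnoinv : ∀ w : V, ¬ (T.Adj w (x w) ∧ x (x w) = w))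
    (v : V) (hv : ∀ w : V, T.dist v (x v) ≤ T.dist w (x w))
    (U Uplus Uminus : Subgroup (Equiv.Perm V))
    (hU : U = A ⊓ MulAction.stabilizer (Equiv.Perm V) v ⊓
      MulAction.stabilizer (Equiv.Perm V) (x v))
    (hUp : Uplus = ⨅ i : ℕ, U.map (MulAut.conj (x ^ (i : ℤ))).toMonoidHom)
    (hUm : Uminus = ⨅ i : ℕ, U.map (MulAut.conj (x ^ (-(i : ℤ)))).toMonoidHom) :
    (U : Set (Equiv.Perm V)) = (Uplus : Set (Equiv.Perm V)) * (Uminus : Set (Equiv.Perm V)) :=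
  tidy_factorisation_for_hyperbolic_general T hconn hacyc A hA x hxA hnofix hnoinv v hv U Uplus
    Uminus hU hUp hUm
end
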